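/- arXiv:0902.1156 — 2 statements merged into one kernel-verified Lean document; each statement's English description precedes it below -/
import Mathlib

section
/- For any ε > 0 there exist β > 1 and n₀ such that every finite connected graph G on n ≥ n₀ vertices having (β, β^{−1})-expansion satisfies spr(G) < 1/4 + ε. -/
open Filter Topology

noncomputable section

namespace SpreadPaper

/-- `f` is a Lipschitz function on the graph `G`. -/
def IsLip {V : Type*} (G : SimpleGraph V) (f : V → ℝ) : Prop :=
  ∀ v w, G.Adj v w → |f v - f w| ≤ 1

/-- The variance of `f X` where `X` is a uniformly random vertex. -/
def fvar {V : Type*} (f : V → ℝ) : ℝ :=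
  (∑ᶠ v, f v ^ 2) / (Nat.card V) - ((∑ᶠ v, f v) / (Nat.card V)) ^ 2

/-- The spread of a graph: the supremum of variances of Lipschitz functions. -/
def spread {V : Type*} (G : SimpleGraph V) : ℝ :=
  sSup {r : ℝ | ∃ f : V → ℝ, IsLip G f ∧ r = fvar f}

/-- `m` is a median of `f`. -/
def IsMedian {V : Type*} (f : V → ℝ) (m : ℝ) : Prop :=
  (Nat.card V : ℝ) / 2 ≤ ({v | m ≤ f v}.ncard : ℝ) ∧
    (Nat.card V : ℝ) / 2 ≤ ({v | f v ≤ m}.ncard : ℝ)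

/-- `G` is `d`-regular. -/
def IsReg {V : Type*} (G : SimpleGraph V) (d : ℕ) : Prop :=
  ∀ v, {w | G.Adj v w}.ncard = d

/-- The probability that a uniformly random `d`-regular simple graph
on `n` labelled vertices satisfies `P`. -/
def regProb (n d : ℕ) (P : SimpleGraph (Fin n) → Prop) : ℝ :=
  ({G : SimpleGraph (Fin n) | IsReg G d ∧ P G}.ncard : ℝ) /
    ({G : SimpleGraph (Fin n) | IsReg G d}.ncard : ℝ)

/-- `P` holds with high probability for the random `d`-regular graph `G(n,d)`,
as `n → ∞` along those `n` for which `n * d` is even. -/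
def WhpReg (d : ℕ) (P : ∀ n, SimpleGraph (Fin n) → Prop) : Prop :=
  Tendsto (fun n => regProb n d (P n)) (atTop ⊓ 𝓟 {n | Even (n * d)}) (𝓝 1)

/-- The probability of the event `A` under the Erdős–Rényi model `G(n,p)`,
where each of the possible edges is present independently with probability `p`. -/
def erProb (n : ℕ) (p : ℝ) (A : Set (SimpleGraph (Fin n))) : ℝ :=
  ∑ᶠ G ∈ A, p ^ G.edgeSet.ncard * (1 - p) ^ (n.choose 2 - G.edgeSet.ncard)

/-- The events `A n` hold with high probability under `G(n, p n)`. -/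
def WhpER (p : ℕ → ℝ) (A : ∀ n, Set (SimpleGraph (Fin n))) : Prop :=
  Tendsto (fun n => erProb n (p n) (A n)) atTop (𝓝 1)

/-- `S` is the vertex set of a largest connected component of `G`. -/
def IsLargestComponent {V : Type*} (G : SimpleGraph V) (S : Set V) : Prop :=
  ∃ c : G.ConnectedComponent, S = c.supp ∧
    ∀ c' : G.ConnectedComponent, c'.supp.ncard ≤ c.supp.ncard

/-- `∑_{v ∈ A} deg(v)`, as the number of pairs `(v,w)` with `v ∈ A` and `vw` an edge. -/
def degSum {V : Type*} (G : SimpleGraph V) (A : Set V) : ℕ :=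
  {p : V × V | p.1 ∈ A ∧ G.Adj p.1 p.2}.ncard

/-- `|E(A,B)|`: the number of edges with one endpoint in `A` and the other in `B`. -/
def cutEdges {V : Type*} (G : SimpleGraph V) (A B : Set V) : ℕ :=
  {e | e ∈ G.edgeSet ∧ ∃ a ∈ A, ∃ b ∈ B, e = s(a, b)}.ncard

/-- The number of edges of `G` with both endpoints in `A`. -/
def edgesWithin {V : Type*} (G : SimpleGraph V) (A : Set V) : ℕ :=
  {e | e ∈ G.edgeSet ∧ ∀ v ∈ e, v ∈ A}.ncard

/-- The Cheeger constant `Φ(G)`. -/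
def cheeger {V : Type*} (G : SimpleGraph V) : ℝ :=
  sInf {r : ℝ | ∃ A : Set V, A.Nonempty ∧ degSum G A ≤ G.edgeSet.ncard ∧
    r = (cutEdges G A Aᶜ : ℝ) / (degSum G A : ℝ)}

/-- `G` is an `α`-expander: every `W` with `|W| ≤ |V|/2` contains at least `α|W|`
vertices having a neighbour outside `W`. -/
def IsExpander {V : Type*} (G : SimpleGraph V) (α : ℝ) : Prop :=
  ∀ W : Set V, (W.ncard : ℝ) ≤ (Nat.card V : ℝ) / 2 →
    α * W.ncard ≤ ({v | v ∈ W ∧ ∃ u, u ∉ W ∧ G.Adj v u}.ncard : ℝ)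

/-- `G` has `(β,η)`-expansion: `|T ∪ N(T)| ≥ β|T|` whenever `|T| ≤ (1-η)|V|/β`. -/
def HasExpansion {V : Type*} (G : SimpleGraph V) (β η : ℝ) : Prop :=
  ∀ T : Set V, (T.ncard : ℝ) ≤ (1 - η) * (Nat.card V) / β →
    β * T.ncard ≤ ((T ∪ {v | ∃ u ∈ T, G.Adj u v}).ncard : ℝ)

/-- The vertex set of the 2-core of `G`: the maximal set all of whose vertices have
at least two neighbours inside the set. -/
def coreSet {V : Type*} (G : SimpleGraph V) : Set V :=
  ⋃₀ {A : Set V | ∀ v ∈ A, 2 ≤ {w | w ∈ A ∧ G.Adj v w}.ncard}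

/-!
Shift a Lipschitz function by a median, so that at least half of the vertices lie on each side
of `0`. Since a Lipschitz function moves by at most one along an edge, `(β, η)`-expansion turns
a level set `{g ≤ t}` with at least `(1 - η) n / β` vertices into a set `{g ≤ t + 1}` missing
fewer than `η n + β` vertices. Taking `t` to be the quantile at that level, all but
`O(n / β + β)` vertices lie in the unit interval `[t, t + 1]`, which accounts for the `1 / 4`.
Iterating expansion from `{g ≥ 2}`, the level sets `{g ≥ 2 + k}` shrink by a factor `β` at each
step, so the tails add only `O(n / β)` to the second moment about `t + 1 / 2`.
-/

section Variance

open Finset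

variable {V : Type*}

lemma IsLip.neg {G : SimpleGraph V} {f : V → ℝ} (hf : IsLip G f) : IsLip G (fun v => -f v) :=
  fun v w h => by rw [neg_sub_neg, abs_sub_comm]; exact hf v w h

lemma IsLip.sub_const {G : SimpleGraph V} {f : V → ℝ} (hf : IsLip G f) (m : ℝ) :
    IsLip G (fun v => f v - m) :=
  fun v w h => by simpa using hf v w h

lemma IsMedian.neg {f : V → ℝ} {m : ℝ} (h : IsMedian f m) : IsMedian (fun v => -f v) (-m) := by
  simpa [IsMedian, and_comm] using h

lemma IsMedian.sub_const {f : V → ℝ} {m : ℝ} (h : IsMedian f m) :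
    IsMedian (fun v => f v - m) 0 := by
  simpa [IsMedian, sub_nonneg] using h

lemma fvar_le_sum_sq_sub_div [Fintype V] (f : V → ℝ) (c : ℝ) :
    fvar f ≤ (∑ v, (f v - c) ^ 2) / Nat.card V := by
  rcases isEmpty_or_nonempty V with hV | hV
  · simp [fvar]
  have hn : (0 : ℝ) < Nat.card V := by exact_mod_cast Nat.card_pos
  have hexpand : ∑ v, (f v - c) ^ 2 = ∑ v, f v ^ 2 - 2 * c * ∑ v, f v + Nat.card V * c ^ 2 := by
    simp only [sub_sq, sum_add_distrib, sum_sub_distrib, ← sum_mul, ← mul_sum, sum_const,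
      card_univ, nsmul_eq_mul, Nat.card_eq_fintype_card]
    ring
  have hbias : (∑ v, (f v - c) ^ 2) / Nat.card V
      = fvar f + ((∑ v, f v) / Nat.card V - c) ^ 2 := by
    rw [hexpand, fvar, finsum_eq_sum_of_fintype, finsum_eq_sum_of_fintype]
    field_simp
    ring
  rw [hbias]
  exact le_add_of_nonneg_right (sq_nonneg _)

lemma exists_quantile [Fintype V] (f : V → ℝ) {θ : ℝ} (hθ0 : 0 < θ)
    (hθ : θ ≤ Nat.card V) :
    ∃ t, ({v | f v < t}.ncard : ℝ) < θ ∧ θ ≤ {v | f v ≤ t}.ncard := by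
  classical
  have : Nonempty V := (Nat.card_pos_iff.1 (by exact_mod_cast hθ0.trans_le hθ)).1
  set P := univ.filter fun v => θ ≤ {w | f w ≤ f v}.ncard
  have hP : P.Nonempty := by
    obtain ⟨v, -, hv⟩ := exists_max_image univ f univ_nonempty
    refine ⟨v, mem_filter.2 ⟨mem_univ v, ?_⟩⟩
    have hall : {w | f w ≤ f v} = Set.univ := Set.eq_univ_of_forall fun w => hv w (mem_univ w)
    rwa [hall, Set.ncard_univ]
  obtain ⟨v₀, hv₀, hmin⟩ := exists_min_image P f hP
  refine ⟨f v₀, ?_, (mem_filter.1 hv₀).2⟩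
  by_contra! hlt
  obtain ⟨w, hw⟩ := Set.nonempty_of_ncard_ne_zero (s := {v | f v < f v₀})
    (by exact_mod_cast (hθ0.trans_le hlt).ne')
  obtain ⟨v₁, hv₁, hmax⟩ :=
    exists_max_image (univ.filter fun v => f v < f v₀) f ⟨w, mem_filter.2 ⟨mem_univ w, hw⟩⟩
  have hv₁lt := (mem_filter.1 hv₁).2
  have hlevel : {w | f w ≤ f v₁} = {w | f w < f v₀} :=
    Set.ext fun w => ⟨fun h => h.trans_lt hv₁lt, fun h => hmax w (mem_filter.2 ⟨mem_univ w, h⟩)⟩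
  have := hmin v₁ (mem_filter.2 ⟨mem_univ v₁, hlevel ▸ hlt⟩)
  linarith

lemma exists_isMedian [Fintype V] [Nonempty V] (f : V → ℝ) : ∃ m, IsMedian f m := by
  have hn : (0 : ℝ) < Nat.card V := by exact_mod_cast Nat.card_pos
  obtain ⟨m, hlt, hle⟩ := exists_quantile f (half_pos hn) (half_le_self hn.le)
  refine ⟨m, ?_, hle⟩
  have hsplit := Set.ncard_add_ncard_compl {v | f v < m}
  rw [Set.compl_ofPred] at hsplit
  simp only [not_lt] at hsplit
  have : ({v | f v < m}.ncard : ℝ) + {v | m ≤ f v}.ncard = Nat.card V := by exact_mod_cast hsplit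
  linarith

end Variance

namespace HasExpansion

variable {V : Type*} [Finite V] {G : SimpleGraph V} {β η : ℝ}

lemma mul_ncard_le (hexp : HasExpansion G β η) {S U : Set V} (hSU : S ⊆ U)
    (hU : ∀ u ∈ S, ∀ v, G.Adj u v → v ∈ U) (hS : (S.ncard : ℝ) ≤ (1 - η) * Nat.card V / β) :
    β * S.ncard ≤ U.ncard := by
  refine (hexp S hS).trans ?_
  gcongr
  · exact Set.toFinite U
  · rintro v (hv | ⟨u, hu, huv⟩)
    exacts [hSU hv, hU u hu v huv]

lemma ncard_compl_lt (hexp : HasExpansion G β η) (hβ : 0 < β) {A U : Set V} (hAU : A ⊆ U)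
    (hU : ∀ u ∈ A, ∀ v, G.Adj u v → v ∈ U) (hA : (1 - η) * Nat.card V / β ≤ A.ncard) :
    (Uᶜ.ncard : ℝ) < η * Nat.card V + β := by
  set θ := (1 - η) * (Nat.card V : ℝ) / β
  obtain ⟨T, hTA, hT⟩ := Set.exists_subset_card_eq (Nat.floor_le_of_le hA)
  have hTU : β * ⌊θ⌋₊ ≤ U.ncard := by
    rcases le_or_gt 0 θ with hθ | hθ
    · rw [← hT]
      exact hexp.mul_ncard_le (hTA.trans hAU) (fun u hu => hU u (hTA hu))
        (hT ▸ Nat.floor_le hθ)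
    · simp [Nat.floor_eq_zero.2 (hθ.trans zero_lt_one)]
  have hsplit : (U.ncard : ℝ) + Uᶜ.ncard = Nat.card V := by
    exact_mod_cast Set.ncard_add_ncard_compl U
  have hfloor : β * θ < β * (⌊θ⌋₊ + 1) := mul_lt_mul_of_pos_left (Nat.lt_floor_add_one θ) hβ
  have hβθ : β * θ = (1 - η) * Nat.card V := mul_div_cancel₀ _ hβ.ne'
  linarith

lemma ncard_lt_sub_one_lt (hexp : HasExpansion G β η) (hβ : 0 < β) {g : V → ℝ}
    (hg : IsLip G g) {t : ℝ} (ht : (1 - η) * Nat.card V / β ≤ {v | t ≤ g v}.ncard) :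
    ({v | g v < t - 1}.ncard : ℝ) < η * Nat.card V + β := by
  have h := hexp.ncard_compl_lt hβ (U := {v | t - 1 ≤ g v})
    (fun v (hv : t ≤ g v) => show t - 1 ≤ g v by linarith)
    (fun u (hu : t ≤ g u) v huv => show t - 1 ≤ g v by linarith [(abs_le.1 (hg u v huv)).2]) ht
  simpa only [Set.compl_ofPred, not_le] using h

lemma ncard_add_one_lt_lt (hexp : HasExpansion G β η) (hβ : 0 < β) {g : V → ℝ}
    (hg : IsLip G g) {t : ℝ} (ht : (1 - η) * Nat.card V / β ≤ {v | g v ≤ t}.ncard) :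
    ({v | t + 1 < g v}.ncard : ℝ) < η * Nat.card V + β := by
  have h := hexp.ncard_compl_lt hβ (U := {v | g v ≤ t + 1})
    (fun v (hv : g v ≤ t) => show g v ≤ t + 1 by linarith)
    (fun u (hu : g u ≤ t) v huv => show g v ≤ t + 1 by linarith [(abs_le.1 (hg u v huv)).1]) ht
  simpa only [Set.compl_ofPred, not_le] using h

lemma ncard_le_lt_of_isMedian (hexp : HasExpansion G β η) (hβ : 0 < β) {g : V → ℝ}
    (hg : IsLip G g) (hmed : IsMedian g 0) (hsmall : η * Nat.card V + β ≤ Nat.card V / 2)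
    {t : ℝ} (ht : 1 < t) :
    ({v | t ≤ g v}.ncard : ℝ) < (1 - η) * Nat.card V / β := by
  by_contra! h
  have hfar := hexp.ncard_lt_sub_one_lt hβ hg h
  have hle : {v | g v ≤ 0}.ncard ≤ {v | g v < t - 1}.ncard :=
    Set.ncard_le_ncard fun v (hv : g v ≤ 0) => show g v < t - 1 by linarith
  have : ({v | g v ≤ 0}.ncard : ℝ) ≤ {v | g v < t - 1}.ncard := by exact_mod_cast hle
  linarith [hmed.2]

lemma pow_mul_ncard_le (hexp : HasExpansion G β η) (hβ : 0 ≤ β) {g : V → ℝ} (hg : IsLip G g)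
    {t : ℝ} (ht : ({v | t ≤ g v}.ncard : ℝ) ≤ (1 - η) * Nat.card V / β) (k : ℕ) :
    β ^ k * {v | t + k ≤ g v}.ncard ≤ {v | t ≤ g v}.ncard := by
  induction k with
  | zero => simp
  | succ k ih =>
    have hsub : {v | t + ↑(k + 1) ≤ g v} ⊆ {v | t + k ≤ g v} := fun v (hv : _ ≤ g v) =>
      show _ ≤ g v by push_cast at hv; linarith
    have hsmall : ({v | t + ↑(k + 1) ≤ g v}.ncard : ℝ) ≤ (1 - η) * Nat.card V / β := by
      refine le_trans ?_ ht
      exact_mod_cast Set.ncard_le_ncard fun v (hv : _ ≤ g v) =>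
        show t ≤ g v by push_cast at hv; linarith [k.cast_nonneg (α := ℝ)]
    have hstep := hexp.mul_ncard_le hsub (fun u (hu : _ ≤ g u) v huv =>
      show _ ≤ g v by push_cast at hu; linarith [(abs_le.1 (hg u v huv)).2]) hsmall
    calc β ^ (k + 1) * {v | t + ↑(k + 1) ≤ g v}.ncard
        = β ^ k * (β * {v | t + ↑(k + 1) ≤ g v}.ncard) := by ring
      _ ≤ β ^ k * {v | t + k ≤ g v}.ncard := by gcongr
      _ ≤ _ := ih

lemma four_pow_mul_ncard_le (hexp : HasExpansion G β η) (hβ : 4 ≤ β) {g : V → ℝ}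
    (hg : IsLip G g) (hmed : IsMedian g 0) (hsmall : η * Nat.card V + β ≤ Nat.card V / 2)
    (k : ℕ) :
    4 ^ k * ({v | 2 + k ≤ |g v|}.ncard : ℝ) ≤ 2 * ((1 - η) * Nat.card V / β) := by
  have hupper : ∀ g : V → ℝ, IsLip G g → IsMedian g 0 →
      4 ^ k * ({v | 2 + k ≤ g v}.ncard : ℝ) ≤ (1 - η) * Nat.card V / β := by
    intro g hg hmed
    have hbase := hexp.ncard_le_lt_of_isMedian (by linarith) hg hmed hsmall one_lt_two
    calc 4 ^ k * ({v | 2 + k ≤ g v}.ncard : ℝ) ≤ β ^ k * {v | 2 + k ≤ g v}.ncard := by gcongr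
      _ ≤ {v | 2 ≤ g v}.ncard := hexp.pow_mul_ncard_le (by linarith) hg hbase.le k
      _ ≤ _ := hbase.le
  have hneg := hupper _ hg.neg (by simpa using hmed.neg)
  have hunion : {v | 2 + k ≤ |g v|} ⊆ {v | 2 + k ≤ g v} ∪ {v | 2 + k ≤ -g v} :=
    fun v (hv : _ ≤ |g v|) => (le_abs'.1 hv).symm.imp_right fun h => show 2 + k ≤ -g v by linarith
  have hcard : ({v | 2 + k ≤ |g v|}.ncard : ℝ)
      ≤ {v | 2 + k ≤ g v}.ncard + {v | 2 + k ≤ -g v}.ncard := by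
    exact_mod_cast (Set.ncard_le_ncard hunion).trans (Set.ncard_union_le _ _)
  have hpos := hupper g hg hmed
  nlinarith [pow_pos (four_pos (α := ℝ)) k]

lemma exists_ncard_one_half_lt_abs_sub_le (hexp : HasExpansion G β η) (hβ : 2 ≤ β)
    (hη0 : 0 ≤ η) (hη1 : η < 1) {g : V → ℝ} (hg : IsLip G g) (hmed : IsMedian g 0)
    (hsmall : η * Nat.card V + β ≤ Nat.card V / 2) :
    ∃ c, |c| ≤ 1 / 2 ∧
      ({v | 1 / 2 < |g v - c|}.ncard : ℝ) ≤ (1 - η) * Nat.card V / β + (η * Nat.card V + β) := by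
  have : Fintype V := Fintype.ofFinite V
  set θ := (1 - η) * (Nat.card V : ℝ) / β
  have hn : (0 : ℝ) < Nat.card V := by nlinarith
  have hθ0 : 0 < θ := div_pos (mul_pos (by linarith) hn) (by linarith)
  have hθ : θ ≤ Nat.card V / 2 := by
    rw [div_le_div_iff₀ (by linarith) two_pos]
    nlinarith
  obtain ⟨t, hlt, hle⟩ := exists_quantile g hθ0 (hθ.trans (half_le_self hn.le))
  have ht0 : t ≤ 0 := by
    by_contra! ht
    have : ({v | g v ≤ 0}.ncard : ℝ) ≤ {v | g v < t}.ncard := by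
      exact_mod_cast Set.ncard_le_ncard fun v (hv : g v ≤ 0) => show g v < t by linarith
    linarith [hmed.2]
  have ht1 : -1 ≤ t := by
    by_contra! ht
    have h := hexp.ncard_le_lt_of_isMedian (by linarith) hg.neg (by simpa using hmed.neg) hsmall
      (t := -t) (by linarith)
    simp only [neg_le_neg_iff] at h
    linarith
  have hup := hexp.ncard_add_one_lt_lt (by linarith) hg hle
  refine ⟨t + 1 / 2, abs_le.2 ⟨by linarith, by linarith⟩, ?_⟩
  have hsub : {v | 1 / 2 < |g v - (t + 1 / 2)|} ⊆ {v | g v < t} ∪ {v | t + 1 < g v} := by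
    intro v (hv : (1 : ℝ) / 2 < |g v - (t + 1 / 2)|)
    rcases lt_abs.1 hv with h | h
    exacts [Or.inr (show t + 1 < g v by linarith), Or.inl (show g v < t by linarith)]
  have : ({v | 1 / 2 < |g v - (t + 1 / 2)|}.ncard : ℝ)
      ≤ {v | g v < t}.ncard + {v | t + 1 < g v}.ncard := by
    exact_mod_cast (Set.ncard_le_ncard hsub).trans (Set.ncard_union_le _ _)
  linarith

end HasExpansion

section Tails

open Finset

lemma sq_le_two_pow_add_four (k : ℕ) : ((k : ℝ) + 4) ^ 2 ≤ 2 ^ (k + 4) := by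
  induction k with
  | zero => norm_num
  | succ k ih =>
    rw [show k + 1 + 4 = k + 4 + 1 by ring, pow_succ (2 : ℝ) (k + 4)]
    push_cast
    nlinarith [k.cast_nonneg (α := ℝ)]

lemma sq_sub_le_of_abs_lt {x c : ℝ} (hc : |c| ≤ 1 / 2) {N : ℕ} (hx : |x| < N + 2) :
    (x - c) ^ 2 ≤ 1 / 4 + 6 * (if 1 / 2 < |x - c| then 1 else 0)
      + ∑ k ∈ range N, (2 : ℝ) ^ (k + 4) * (if 2 + k ≤ |x| then 1 else 0) := by
  have hterm : ∀ k ∈ range N, 0 ≤ (2 : ℝ) ^ (k + 4) * (if 2 + k ≤ |x| then 1 else 0) := by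
    intro k _
    split_ifs <;> positivity
  have htail := sum_nonneg hterm
  have hdist : |x - c| ≤ |x| + 1 / 2 := (abs_sub _ _).trans (by linarith)
  rcases le_or_gt |x - c| (1 / 2) with hnear | hfar
  · rw [if_neg hnear.not_gt, ← sq_abs]
    nlinarith [abs_nonneg (x - c)]
  rw [if_pos hfar, ← sq_abs]
  rcases lt_or_ge |x| 2 with hsmall | hlarge
  · nlinarith [abs_nonneg (x - c)]
  set k := ⌊|x| - 2⌋₊
  have hk : 2 + (k : ℝ) ≤ |x| := by linarith [Nat.floor_le (sub_nonneg.2 hlarge)]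
  have hk' : |x| < 3 + k := by linarith [Nat.lt_floor_add_one (|x| - 2)]
  have hkN : k ∈ range N := mem_range.2 (by exact_mod_cast (by linarith : (k : ℝ) < N))
  have hsingle := single_le_sum hterm hkN
  rw [if_pos hk, mul_one] at hsingle
  nlinarith [abs_nonneg (x - c), sq_le_two_pow_add_four k]

variable {V : Type*} [Fintype V]

lemma sum_boole_eq_ncard (p : V → Prop) [DecidablePred p] :
    ∑ v, (if p v then (1 : ℝ) else 0) = ({v | p v}.ncard : ℝ) := by
  rw [sum_boole, Set.ncard_eq_toFinset_card', Set.toFinset_ofPred]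

lemma sum_sq_sub_le (g : V → ℝ) {c δ θ : ℝ} (hc : |c| ≤ 1 / 2)
    (hfar : ({v | 1 / 2 < |g v - c|}.ncard : ℝ) ≤ δ)
    (htail : ∀ k : ℕ, 4 ^ k * ({v | 2 + k ≤ |g v|}.ncard : ℝ) ≤ θ) :
    ∑ v, (g v - c) ^ 2 ≤ Nat.card V / 4 + 6 * δ + 32 * θ := by
  classical
  obtain ⟨N, hN⟩ : ∃ N : ℕ, ∀ v, |g v| < N + 2 := ⟨⌈∑ v, |g v|⌉₊, fun v => by
    linarith [single_le_sum (fun w _ => abs_nonneg (g w)) (mem_univ v), Nat.le_ceil (∑ v, |g v|)]⟩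
  have hθ : 0 ≤ θ := le_trans (by positivity) (htail 0)
  have hweight : ∀ k : ℕ,
      (2 : ℝ) ^ (k + 4) * {v | 2 + k ≤ |g v|}.ncard ≤ 16 * θ * (1 / 2) ^ k := by
    intro k
    have h4 : (2 : ℝ) ^ (k + 4) = 16 * (1 / 2) ^ k * 4 ^ k := by
      rw [pow_add, div_pow, show (4 : ℝ) ^ k = 2 ^ k * 2 ^ k by rw [← mul_pow]; norm_num]
      field_simp
      norm_num
    rw [h4, mul_assoc, mul_right_comm]
    gcongr
    exact htail k
  calc ∑ v, (g v - c) ^ 2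
      ≤ ∑ v, (1 / 4 + 6 * (if 1 / 2 < |g v - c| then 1 else 0)
          + ∑ k ∈ range N, (2 : ℝ) ^ (k + 4) * (if 2 + k ≤ |g v| then 1 else 0)) :=
        sum_le_sum fun v _ => sq_sub_le_of_abs_lt hc (hN v)
    _ = Nat.card V / 4 + 6 * {v | 1 / 2 < |g v - c|}.ncard
          + ∑ k ∈ range N, (2 : ℝ) ^ (k + 4) * {v | 2 + k ≤ |g v|}.ncard := by
        simp only [sum_add_distrib, ← mul_sum, sum_boole_eq_ncard, sum_const, card_univ,
          nsmul_eq_mul, Nat.card_eq_fintype_card]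
        rw [sum_comm]
        simp only [← mul_sum, sum_boole_eq_ncard]
        ring
    _ ≤ Nat.card V / 4 + 6 * δ + ∑ k ∈ range N, 16 * θ * (1 / 2) ^ k := by
        have := sum_le_sum fun k (_ : k ∈ range N) => hweight k
        linarith
    _ ≤ Nat.card V / 4 + 6 * δ + 32 * θ := by
        rw [← mul_sum]
        nlinarith [sum_geometric_two_le N]

end Tails

lemma HasExpansion.fvar_le {V : Type*} [Fintype V] {G : SimpleGraph V} {β η : ℝ}
    (hexp : HasExpansion G β η) (hβ : 4 ≤ β) (hη0 : 0 ≤ η) (hη1 : η < 1)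
    (hsmall : η * Nat.card V + β ≤ Nat.card V / 2) {f : V → ℝ} (hf : IsLip G f) :
    fvar f ≤ 1 / 4 + 70 / β + 6 * η + 6 * β / Nat.card V := by
  have hn : (0 : ℝ) < Nat.card V := by nlinarith
  have : Nonempty V := (Nat.card_pos_iff.1 (by exact_mod_cast hn)).1
  obtain ⟨m, hm⟩ := exists_isMedian f
  set g := fun v => f v - m
  have hg : IsLip G g := hf.sub_const m
  obtain ⟨c, hc, hfar⟩ :=
    hexp.exists_ncard_one_half_lt_abs_sub_le (by linarith) hη0 hη1 hg hm.sub_const hsmall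
  have hsum := sum_sq_sub_le g hc hfar
    (hexp.four_pow_mul_ncard_le hβ hg hm.sub_const hsmall)
  have hθ : (1 - η) * Nat.card V / β ≤ Nat.card V / β := by
    gcongr
    exact mul_le_of_le_one_left hn.le (by linarith)
  calc fvar f ≤ (∑ v, (f v - (m + c)) ^ 2) / Nat.card V := fvar_le_sum_sq_sub_div f (m + c)
    _ = (∑ v, (g v - c) ^ 2) / Nat.card V := by simp only [g, sub_sub]
    _ ≤ 1 / 4 + 70 / β + 6 * η + 6 * β / Nat.card V := by
      rw [div_le_iff₀ hn]
      have hexpand : (1 / 4 + 70 / β + 6 * η + 6 * β / Nat.card V) * Nat.card V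
          = Nat.card V / 4 + 70 * (Nat.card V / β) + 6 * (η * Nat.card V + β) := by
        field_simp
        ring
      linarith

lemma spread_le_of_forall_fvar_le {V : Type*} {G : SimpleGraph V} {b : ℝ}
    (h : ∀ f, IsLip G f → fvar f ≤ b) : spread G ≤ b :=
  csSup_le ⟨_, 0, fun _ _ _ => by simp, rfl⟩ fun _ ⟨f, hf, hr⟩ => hr ▸ h f hf

lemma HasExpansion.spread_le {V : Type*} [Fintype V] {G : SimpleGraph V} {β : ℝ}
    (hexp : HasExpansion G β β⁻¹) (hβ : 4 ≤ β) (hn : 4 * β ≤ Nat.card V) :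
    spread G ≤ 1 / 4 + 76 / β + 6 * β / Nat.card V := by
  have hsmall : β⁻¹ * Nat.card V + β ≤ Nat.card V / 2 := by
    have : β⁻¹ * Nat.card V ≤ Nat.card V / 4 := by
      rw [inv_mul_eq_div]
      gcongr
    linarith
  refine spread_le_of_forall_fvar_le fun f hf => (hexp.fvar_le hβ (by positivity)
    (inv_lt_one_of_one_lt₀ (by linarith)) hsmall hf).trans_eq ?_
  ring

/-- for every `ε > 0` there exist `β > 1` and `n₀` such that every
connected graph on at least `n₀` vertices with `(β, β⁻¹)`-expansion has spread
less than `1/4 + ε`. -/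
theorem expansion_spread_upper (ε : ℝ) (hε : 0 < ε) :
    ∃ β : ℝ, 1 < β ∧ ∃ n₀ : ℕ, ∀ (V : Type) [Fintype V] (G : SimpleGraph V),
      G.Connected → n₀ ≤ Fintype.card V → HasExpansion G β β⁻¹ →
        spread G < 1 / 4 + ε := by
  set β : ℝ := 4 + 152 / ε with hβdef
  have hβ : 4 ≤ β := le_add_of_nonneg_right (by positivity)
  refine ⟨β, by linarith, ⌈(4 + 12 / ε) * β⌉₊, fun V _ G _ hV hexp => ?_⟩
  have hn : (4 + 12 / ε) * β ≤ Nat.card V := by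
    rw [Nat.card_eq_fintype_card]
    exact (Nat.le_ceil _).trans (by exact_mod_cast hV)
  have hn4 : 4 * β ≤ Nat.card V :=
    le_trans (mul_le_mul_of_nonneg_right (le_add_of_nonneg_right (by positivity)) (by linarith)) hn
  have hβε : 76 / β < ε / 2 := by
    rw [div_lt_iff₀ (by linarith)]
    have : ε / 2 * β = 2 * ε + 76 := by rw [hβdef]; field_simp; ring
    linarith
  have hnε : 6 * β / Nat.card V ≤ ε / 2 := by
    rw [div_le_iff₀ (by linarith)]
    have : ε / 2 * ((4 + 12 / ε) * β) = 2 * ε * β + 6 * β := by field_simp; ring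
    nlinarith
  linarith [hexp.spread_le hβ hn4]

end SpreadPaper
end
end

section
/- For the complete graph K_n on n ≥ 2 vertices, spr(K_n) = 1/4 if n is even, and spr(K_n) = 1/4 − 1/(4n²) if n is odd. -/
open Filter Topology

noncomputable section

namespace SpreadPaper

section AuxSpread
open Finset

private lemma key_aux (n : ℕ) (hn : Odd n) :
    ∀ (k : ℕ) (t : Fin n → ℝ), (∀ i, |t i| ≤ 1) →
      (Finset.univ.filter fun i => t i ≠ 1 ∧ t i ≠ -1).card ≤ k →
      1 - (n : ℝ) ≤ (∑ i, t i) ^ 2 - ∑ i, t i ^ 2 := by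
  classical
  intro k
  induction k with
  | zero =>
      intro t ht hcard
      have hfe : ∀ i, t i = 1 ∨ t i = -1 := by
        intro i
        by_contra h
        push_neg at h
        have hi : i ∈ Finset.univ.filter fun i => t i ≠ 1 ∧ t i ≠ -1 := by
          simp [h.1, h.2]
        have := Finset.card_pos.mpr ⟨i, hi⟩
        omega
      set p := (Finset.univ.filter fun i => t i = 1).card with hp
      have hq : (Finset.univ.filter fun i => ¬ t i = 1).card = n - p := by
        have := Finset.card_filter_add_card_filter_not
          (s := (Finset.univ : Finset (Fin n))) (p := fun i => t i = 1)
        simp at this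
        omega
      have hpn : p ≤ n := by
        simpa using Finset.card_filter_le (Finset.univ : Finset (Fin n)) (fun i => t i = 1)
      have hsum : ∑ i, t i = 2 * (p : ℝ) - n := by
        have h1 : ∀ i, t i = if t i = 1 then (1:ℝ) else -1 := by
          intro i; rcases hfe i with h | h <;> simp [h] <;> norm_num
        rw [Finset.sum_congr rfl fun i _ => h1 i, Finset.sum_ite]
        rw [Finset.sum_const, Finset.sum_const, hq, nsmul_eq_mul, nsmul_eq_mul,
          Nat.cast_sub hpn]
        ring
      have hsq : ∑ i, t i ^ 2 = (n : ℝ) := by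
        have : ∀ i, t i ^ 2 = 1 := by
          intro i; rcases hfe i with h | h <;> simp [h]
        rw [Finset.sum_congr rfl fun i _ => this i]
        simp
      rw [hsum, hsq]
      have hodd : Odd (2 * (p : ℤ) - n) := by
        rcases hn with ⟨m, hm⟩
        exact ⟨(p : ℤ) - m - 1, by push_cast [hm]; ring⟩
      have hne : (2 * (p : ℤ) - n) ≠ 0 := by
        intro h; rw [h] at hodd; exact (Int.not_odd_iff_even.mpr Even.zero) hodd
      have habs : 1 ≤ |2 * (p : ℤ) - n| := Int.one_le_abs hne
      have h2 : (1 : ℤ) ≤ (2 * (p : ℤ) - n) ^ 2 := by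
        nlinarith [sq_abs (2 * (p : ℤ) - n)]
      have h3 : (1 : ℝ) ≤ (2 * (p : ℝ) - n) ^ 2 := by
        exact_mod_cast h2
      linarith
  | succ k ih =>
      intro t ht hcard
      by_cases hk : (Finset.univ.filter fun i => t i ≠ 1 ∧ t i ≠ -1).card ≤ k
      · exact ih t ht hk
      · have hne : (Finset.univ.filter fun i => t i ≠ 1 ∧ t i ≠ -1).Nonempty := by
          rw [← Finset.card_pos]; omega
        obtain ⟨j, hj⟩ := hne
        simp only [Finset.mem_filter, Finset.mem_univ, true_and] at hj
        set s' : ℝ := ∑ i ∈ Finset.univ.erase j, t i with hs'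
        set v : ℝ := if 0 ≤ s' then -1 else 1 with hv
        set t' : Fin n → ℝ := Function.update t j v with ht'
        have hvmem : v = -1 ∨ v = 1 := by
          rw [hv]; split
          · exact Or.inl rfl
          · exact Or.inr rfl
        have ht'b : ∀ i, |t' i| ≤ 1 := by
          intro i
          by_cases h : i = j
          · subst h; rw [ht', Function.update_self]
            rcases hvmem with h | h <;> rw [h] <;> norm_num
          · rw [ht', Function.update_of_ne h]; exact ht i
        have hsub : (Finset.univ.filter fun i => t' i ≠ 1 ∧ t' i ≠ -1)
            ⊆ (Finset.univ.filter fun i => t i ≠ 1 ∧ t i ≠ -1).erase j := by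
          intro i hi
          simp only [Finset.mem_filter, Finset.mem_univ, true_and] at hi
          have hij : i ≠ j := by
            intro h; subst h
            rw [ht', Function.update_self] at hi
            rcases hvmem with h | h
            · exact hi.2 h
            · exact hi.1 h
          rw [Finset.mem_erase]
          refine ⟨hij, ?_⟩
          simp only [Finset.mem_filter, Finset.mem_univ, true_and]
          rwa [ht', Function.update_of_ne hij] at hi
        have hcard' : (Finset.univ.filter fun i => t' i ≠ 1 ∧ t' i ≠ -1).card ≤ k := by
          have h1 := Finset.card_le_card hsub
          have h2 : ((Finset.univ.filter fun i => t i ≠ 1 ∧ t i ≠ -1).erase j).card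
              = (Finset.univ.filter fun i => t i ≠ 1 ∧ t i ≠ -1).card - 1 := by
            apply Finset.card_erase_of_mem
            simp [hj.1, hj.2]
          omega
        have hIH := ih t' ht'b hcard'
        -- now show Q t' ≤ Q t
        have hsumt : ∑ i, t i = t j + s' := by
          rw [hs', Finset.add_sum_erase _ _ (Finset.mem_univ j)]
        have hsumt' : ∑ i, t' i = v + s' := by
          rw [hs']
          rw [← Finset.add_sum_erase _ t' (Finset.mem_univ j)]
          congr 1
          · simp [ht']
          · apply Finset.sum_congr rfl
            intro i hi
            rw [Finset.mem_erase] at hi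
            simp [ht', Function.update_of_ne hi.1]
        have hsqt : ∑ i, t i ^ 2 = t j ^ 2 + ∑ i ∈ Finset.univ.erase j, t i ^ 2 := by
          rw [← Finset.add_sum_erase _ (fun i => t i ^ 2) (Finset.mem_univ j)]
        have hsqt' : ∑ i, t' i ^ 2 = v ^ 2 + ∑ i ∈ Finset.univ.erase j, t i ^ 2 := by
          rw [← Finset.add_sum_erase _ (fun i => t' i ^ 2) (Finset.mem_univ j)]
          congr 1
          · simp [ht']
          · apply Finset.sum_congr rfl
            intro i hi
            rw [Finset.mem_erase] at hi
            simp [ht', Function.update_of_ne hi.1]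
        have hline : s' * v ≤ s' * t j := by
          rw [hv]
          split
          · nlinarith [abs_le.mp (ht j)]
          · nlinarith [abs_le.mp (ht j)]
        have hv2 : v ^ 2 = 1 := by rcases hvmem with h | h <;> rw [h] <;> norm_num
        calc 1 - (n:ℝ) ≤ (∑ i, t' i) ^ 2 - ∑ i, t' i ^ 2 := hIH
          _ ≤ (∑ i, t i) ^ 2 - ∑ i, t i ^ 2 := by
              rw [hsumt, hsumt', hsqt, hsqt', hv2]
              have htj2 : t j ^ 2 ≤ 1 := by nlinarith [abs_le.mp (ht j)]
              nlinarith

private lemma key (n : ℕ) (hn : Odd n) (t : Fin n → ℝ) (ht : ∀ i, |t i| ≤ 1) :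
    1 - (n : ℝ) ≤ (∑ i, t i) ^ 2 - ∑ i, t i ^ 2 :=
  key_aux n hn _ t ht le_rfl

private lemma fvar_fin (n : ℕ) (f : Fin n → ℝ) :
    fvar f = (∑ i, f i ^ 2) / n - ((∑ i, f i) / n) ^ 2 := by
  rw [fvar, finsum_eq_sum_of_fintype, finsum_eq_sum_of_fintype, Nat.card_eq_fintype_card,
    Fintype.card_fin]

/-- reduction: bound `n² fvar f` in terms of a shifted, scaled function `t` -/
private lemma fvar_eq (n : ℕ) (hn : 0 < n) (f : Fin n → ℝ) (c : ℝ) :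
    fvar f = ((n : ℝ) * ∑ i, (2 * (f i - c)) ^ 2 - (∑ i, 2 * (f i - c)) ^ 2) / (4 * n ^ 2) := by
  have hn' : (n : ℝ) ≠ 0 := Nat.cast_ne_zero.mpr hn.ne'
  rw [fvar_fin]
  have h1 : ∑ i, (2 * (f i - c)) ^ 2 = 4 * ∑ i, f i ^ 2 - 8 * c * ∑ i, f i + 4 * n * c ^ 2 := by
    have : ∀ i : Fin n, (2 * (f i - c)) ^ 2 = 4 * f i ^ 2 - 8 * c * f i + 4 * c ^ 2 := by
      intro i; ring
    rw [Finset.sum_congr rfl fun i _ => this i]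
    rw [Finset.sum_add_distrib, Finset.sum_sub_distrib, ← Finset.mul_sum, ← Finset.mul_sum,
      Finset.sum_const, Finset.card_univ, Fintype.card_fin, nsmul_eq_mul]
    ring
  have h2 : ∑ i, 2 * (f i - c) = 2 * ∑ i, f i - 2 * n * c := by
    rw [← Finset.mul_sum, Finset.sum_sub_distrib, Finset.sum_const, Finset.card_univ,
      Fintype.card_fin, nsmul_eq_mul]
    ring
  rw [h1, h2]
  field_simp
  ring

private lemma lip_bound (n : ℕ) (hn : 2 ≤ n) (f : Fin n → ℝ)
    (hf : IsLip (⊤ : SimpleGraph (Fin n)) f) :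
    ∃ c : ℝ, ∀ i, |2 * (f i - c)| ≤ 1 := by
  have hne : (Finset.univ : Finset (Fin n)).Nonempty := by
    rw [Finset.univ_nonempty_iff]
    exact Fin.pos_iff_nonempty.mp (by omega)
  obtain ⟨imax, _, hmax⟩ := Finset.exists_max_image Finset.univ f hne
  obtain ⟨imin, _, hmin⟩ := Finset.exists_min_image Finset.univ f hne
  set M := f imax
  set m := f imin
  have hMm : M - m ≤ 1 := by
    by_cases h : imax = imin
    · simp [M, m, h]
    · have := hf imax imin (by simpa using h)
      have := abs_le.mp this
      linarith [this.2]
  refine ⟨(m + M) / 2, fun i => ?_⟩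
  have h1 : f i ≤ M := hmax i (Finset.mem_univ i)
  have h2 : m ≤ f i := hmin i (Finset.mem_univ i)
  rw [abs_le]
  constructor <;> linarith

private lemma fvar_le_even (n : ℕ) (hn : 2 ≤ n) (f : Fin n → ℝ)
    (hf : IsLip (⊤ : SimpleGraph (Fin n)) f) : fvar f ≤ 1 / 4 := by
  obtain ⟨c, hc⟩ := lip_bound n hn f hf
  rw [fvar_eq n (by omega) f c]
  set t : Fin n → ℝ := fun i => 2 * (f i - c) with hts
  have hc' : ∀ i, |t i| ≤ 1 := hc
  have h1 : ∑ i, t i ^ 2 ≤ n := by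
    calc ∑ i, t i ^ 2 ≤ ∑ _i : Fin n, (1 : ℝ) := by
          apply Finset.sum_le_sum
          intro i _
          nlinarith [abs_le.mp (hc' i)]
      _ = n := by simp
  have h2 : (0:ℝ) ≤ (∑ i, t i) ^ 2 := sq_nonneg _
  have hn0 : (0:ℝ) < (n:ℝ) ^ 2 := by positivity
  rw [div_le_div_iff₀ (by positivity) (by norm_num)]
  nlinarith

private lemma fvar_le_odd (n : ℕ) (hn : 2 ≤ n) (hodd : Odd n) (f : Fin n → ℝ)
    (hf : IsLip (⊤ : SimpleGraph (Fin n)) f) : fvar f ≤ 1 / 4 - 1 / (4 * n ^ 2) := by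
  obtain ⟨c, hc⟩ := lip_bound n hn f hf
  rw [fvar_eq n (by omega) f c]
  set t : Fin n → ℝ := fun i => 2 * (f i - c) with hts
  have hc' : ∀ i, |t i| ≤ 1 := hc
  have h1 : ∑ i, t i ^ 2 ≤ n := by
    calc ∑ i, t i ^ 2 ≤ ∑ _i : Fin n, (1 : ℝ) := by
          apply Finset.sum_le_sum
          intro i _
          nlinarith [abs_le.mp (hc' i)]
      _ = n := by simp
  have h2 := key n hodd t hc
  have hn0 : (0:ℝ) < (n:ℝ) ^ 2 := by
    have : (0:ℝ) < n := by exact_mod_cast (by omega : 0 < n)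
    positivity
  rw [div_le_iff₀ (by positivity)]
  have hexp : (1 / 4 - 1 / (4 * (n:ℝ) ^ 2)) * (4 * n ^ 2) = n ^ 2 - 1 := by
    field_simp
  rw [hexp]
  -- n * Σt² - (Σt)² ≤ (n-1) Σt² + (n - 1) ≤ n² - 1
  have hnn : (1:ℝ) ≤ (n:ℝ) := by exact_mod_cast (by omega : 1 ≤ n)
  nlinarith [Finset.sum_le_sum (fun i (_ : i ∈ Finset.univ) =>
    (sq_nonneg (t i)))]

private lemma sum_indicator (n m : ℕ) (hm : m ≤ n) :
    ∑ i : Fin n, (if (i : ℕ) < m then (0:ℝ) else 1) = (n - m : ℕ) := by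
  classical
  rw [Fin.sum_univ_eq_sum_range (fun j => if j < m then (0:ℝ) else 1) n]
  rw [Finset.sum_ite, Finset.sum_const, Finset.sum_const]
  simp only [smul_zero, zero_add, nsmul_eq_mul, mul_one]
  congr 1
  have h1 : (Finset.range n).filter (fun j => ¬ j < m) = Finset.Ico m n := by
    ext j
    simp [Finset.mem_filter, Finset.mem_range, Finset.mem_Ico]
    omega
  rw [h1, Nat.card_Ico]

def f0 (n : ℕ) : Fin n → ℝ := fun i => if (i : ℕ) < n / 2 then 0 else 1

private lemma f0_lip (n : ℕ) : IsLip (⊤ : SimpleGraph (Fin n)) (f0 n) := by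
  intro v w _
  unfold f0
  split_ifs <;> norm_num

private lemma f0_fvar (n : ℕ) (hn : 0 < n) :
    fvar (f0 n) = ((n - n/2 : ℕ) : ℝ) / n - (((n - n/2 : ℕ) : ℝ) / n) ^ 2 := by
  rw [fvar_fin]
  have hsq : ∀ i : Fin n, f0 n i ^ 2 = f0 n i := by
    intro i; unfold f0; split_ifs <;> norm_num
  rw [Finset.sum_congr rfl fun i _ => hsq i]
  rw [show ∑ i, f0 n i = ((n - n/2 : ℕ) : ℝ) from sum_indicator n (n/2) (Nat.div_le_self n 2)]

private lemma f0_fvar_even (n : ℕ) (hn : 2 ≤ n) (he : Even n) : fvar (f0 n) = 1 / 4 := by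
  obtain ⟨m, hm⟩ := he
  have hm' : n = 2 * m := by omega
  have hm0 : 0 < m := by omega
  rw [f0_fvar n (by omega), hm']
  have h1 : (2 * m) / 2 = m := by omega
  rw [h1]
  have h2 : 2 * m - m = m := by omega
  rw [h2]
  have hmr : (0:ℝ) < m := by exact_mod_cast hm0
  push_cast
  field_simp
  ring

private lemma f0_fvar_odd (n : ℕ) (hn : 2 ≤ n) (ho : Odd n) :
    fvar (f0 n) = 1 / 4 - 1 / (4 * n ^ 2) := by
  obtain ⟨m, hm⟩ := ho
  have hm0 : 0 < m := by omega
  rw [f0_fvar n (by omega), hm]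
  have h1 : (2 * m + 1) / 2 = m := by omega
  rw [h1]
  have h2 : 2 * m + 1 - m = m + 1 := by omega
  rw [h2]
  have hmr : (0:ℝ) < m := by exact_mod_cast hm0
  push_cast
  field_simp
  ring

end AuxSpread

/-- the spread of the complete graph `K_n` (`n ≥ 2`) is `1/4` for
even `n` and `1/4 − 1/(4n²)` for odd `n`. -/
theorem spread_complete_graph (n : ℕ) (hn : 2 ≤ n) :
    (Even n → spread (⊤ : SimpleGraph (Fin n)) = 1 / 4) ∧
      (Odd n → spread (⊤ : SimpleGraph (Fin n)) = 1 / 4 - 1 / (4 * n ^ 2)) := by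
  constructor
  · intro he
    apply IsGreatest.csSup_eq
    constructor
    · exact ⟨f0 n, f0_lip n, (f0_fvar_even n hn he).symm⟩
    · rintro r ⟨f, hf, rfl⟩
      exact fvar_le_even n hn f hf
  · intro ho
    apply IsGreatest.csSup_eq
    constructor
    · exact ⟨f0 n, f0_lip n, (f0_fvar_odd n hn ho).symm⟩
    · rintro r ⟨f, hf, rfl⟩
      exact fvar_le_odd n hn ho f hf

end SpreadPaper
end
end
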